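/- For every ab-monomial w of length at least 1 (hence, by linearity, for every homogeneous ab-polynomial w of positive degree), φ_ub(a·w) = ω(a·r(w))·(a − b). -/

import Mathlib

open scoped TensorProduct

noncomputable section

namespace CD


/-- ab-words: `false` represents the letter `a`, `true` represents the letter `b`. -/
abbrev Word := List Bool

/-- The free associative ℤ-algebra ℤ⟨a,b⟩ on two noncommuting variables. -/
abbrev ZAB := MonoidAlgebra ℤ (FreeMonoid Bool)

/-- The ab-monomial associated to a word. -/
def mon (w : Word) : ZAB := MonoidAlgebra.single (FreeMonoid.ofList w) 1

/-- The variable `a`. -/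
def genA : ZAB := mon [false]
/-- The variable `b`. -/
def genB : ZAB := mon [true]
/-- `c = a + b`. -/
def genC : ZAB := genA + genB
/-- `d = ab + ba`. -/
def genD : ZAB := genA * genB + genB * genA
/-- `a - b`. -/
def amb : ZAB := genA - genB

/-- Extend a function defined on ab-monomials to a ℤ-linear map on ℤ⟨a,b⟩. -/
def lin (f : Word → ZAB) : ZAB →ₗ[ℤ] ZAB :=
  Finsupp.lift ZAB ℤ (FreeMonoid Bool) (fun w => f (FreeMonoid.toList w))
    ∘ₗ (MonoidAlgebra.coeffLinearEquiv ℤ).toLinearMap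

/-- κ : κ(aᵐ) = (a-b)ᵐ, and 0 on all other ab-monomials. -/
def kappaW (w : Word) : ZAB :=
  if ∀ x ∈ w, x = false then amb ^ w.length else 0

/-- β : β(bᵐ) = (a-b)ᵐ, and 0 on all other ab-monomials. -/
def betaW (w : Word) : ZAB :=
  if ∀ x ∈ w, x = true then amb ^ w.length else 0

/-- η : η(bᵐaᵏ) = 2·(a-b)^{m+k}, and 0 on all other ab-monomials. -/
def etaW (w : Word) : ZAB :=
  if List.IsChain (· ≥ ·) w then (2 : ℤ) • amb ^ w.length else 0

/-- λ_t : λ_t(bᵐ) = (a-b)ᵐ, λ_t(bᵐa) = (a-b)^{m+1}, and 0 on all other ab-monomials. -/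
def lamTW (w : Word) : ZAB :=
  if List.IsChain (· ≥ ·) w ∧ w.count false ≤ 1 then amb ^ w.length else 0

/-- λ_ub = η - 2·β. -/
def lamUbW (w : Word) : ZAB := etaW w - (2 : ℤ) • betaW w

/-- ω : first replace each occurrence of ab by 2d, then each remaining letter by c. -/
def omegaW : Word → ZAB
  | [] => 1
  | false :: true :: w => ((2 : ℤ) • genD) * omegaW w
  | _ :: w => genC * omegaW w

/-- H′ : removes the last letter of an ab-monomial (`H′(1) = 0`). -/
def HpW (w : Word) : ZAB := if w = [] then 0 else mon w.dropLast

/-- r : r(1) = 0, r(v·a) = v, r(v·b) = 0. -/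
def rW (w : Word) : ZAB := if w.getLast? = some false then mon w.dropLast else 0

/-- The reversal involution on ab-monomials. -/
def revW (w : Word) : ZAB := mon w.reverse

/-- `conv F G (w) = Σ_w F(w₍₁₎)·b·G(w₍₂₎)`, the sum over the coproduct of the word `w`,
i.e. over all ways of removing one letter from `w`, splitting it in two pieces. -/
def conv (F G : Word → ZAB) (w : Word) : ZAB :=
  ∑ i ∈ Finset.range w.length, F (w.take i) * genB * G (w.drop (i + 1))

/-- `tailChain lam j (w) = Σ_w η(w₍₁₎)·b·η(w₍₂₎)·b ⋯ b·η(w₍ⱼ₎)·b·lam(w₍ⱼ₊₁₎)`: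
a chain of `j` η's followed by the map `lam`, summed over the iterated coproduct. -/
def tailChain (lam : Word → ZAB) : ℕ → Word → ZAB
  | 0 => lam
  | j + 1 => conv etaW (tailChain lam j)

/-- φ_k : φ_1 = κ and, for k ≥ 2, `φ_k(v) = Σ_v κ(v₍₁₎)·b·η(v₍₂₎)·b ⋯ b·η(v₍ₖ₎)`,
the sum over the iterated coproduct Δ^{k-1}. -/
def phiK : ℕ → Word → ZAB
  | 0 => fun _ => 0
  | 1 => kappaW
  | k + 2 => conv kappaW (tailChain etaW k)

/-- φ_{t,k} : φ_{t,1} = κ and, for k ≥ 2,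
`φ_{t,k}(v) = Σ_v κ(v₍₁₎)·b·η(v₍₂₎)·b ⋯ b·η(v₍ₖ₋₁₎)·b·λ_t(v₍ₖ₎)`. -/
def phiTK : ℕ → Word → ZAB
  | 0 => fun _ => 0
  | 1 => kappaW
  | k + 2 => conv kappaW (tailChain lamTW k)

/-- φ_{ub,k} : φ_{ub,1} = κ and, for k ≥ 2,
`φ_{ub,k}(v) = Σ_v κ(v₍₁₎)·b·η(v₍₂₎)·b ⋯ b·η(v₍ₖ₋₁₎)·b·λ_ub(v₍ₖ₎)`. -/
def phiUbK : ℕ → Word → ZAB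
  | 0 => fun _ => 0
  | 1 => kappaW
  | k + 2 => conv kappaW (tailChain lamUbW k)

/-- φ = Σ_{k ≥ 1} φ_k (on a word of length ℓ, only terms with k ≤ ℓ + 1 are nonzero). -/
def phiW (w : Word) : ZAB := ∑ k ∈ Finset.range (w.length + 2), phiK k w

/-- φ_t = Σ_{k ≥ 1} φ_{t,k}. -/
def phiTW (w : Word) : ZAB := ∑ k ∈ Finset.range (w.length + 2), phiTK k w

/-- φ_ub = Σ_{k ≥ 1} φ_{ub,k}. -/
def phiUbW (w : Word) : ZAB := ∑ k ∈ Finset.range (w.length + 2), phiUbK k w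

/-- The coproduct Δ on ℤ⟨a,b⟩: Δ(u₁u₂⋯uₙ) = Σᵢ u₁⋯u_{i-1} ⊗ u_{i+1}⋯uₙ. -/
def Delta : ZAB →ₗ[ℤ] (ZAB ⊗[ℤ] ZAB) :=
  Finsupp.lift (ZAB ⊗[ℤ] ZAB) ℤ (FreeMonoid Bool)
    (fun w => ∑ i ∈ Finset.range (FreeMonoid.toList w).length,
      mon ((FreeMonoid.toList w).take i) ⊗ₜ[ℤ] mon ((FreeMonoid.toList w).drop (i + 1)))
    ∘ₗ (MonoidAlgebra.coeffLinearEquiv ℤ).toLinearMap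

/-- For linear maps F, G, the linear map `u ⊗ w ↦ F(u)·b·G(w)`; applying it to Δ(v)
gives the Sweedler sum `Σ_v F(v₍₁₎)·b·G(v₍₂₎)`. -/
def sandwich (F G : ZAB →ₗ[ℤ] ZAB) : (ZAB ⊗[ℤ] ZAB) →ₗ[ℤ] ZAB :=
  TensorProduct.lift
    (((LinearMap.mul ℤ ZAB).comp ((LinearMap.mulRight ℤ genB).comp F)).compl₂ G)

/-! Write χ(v) = (a-b)^{|v|} for v = bᵐaᵏ and χ(v) = 0 otherwise, so that η = 2χ and κ agrees with χ
on the empty word and on words starting with a. Peeling off the first letter of v (using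
c = (a-b) + 2b and ab + ba = d) gives the key identity ω(v) = χ(v) + Σ_v η(v₍₁₎)·b·ω(v₍₂₎).

The tails T = Σ_j η·b·η⋯b·λ_ub of all lengths satisfy T(v) = λ_ub(v) + Σ_v η(v₍₁₎)·b·T(v₍₂₎), and the
key identity shows that T(va) = 2ω(v)(a-b), T(vb) = 0 solves this recursion. Hence
φ_ub(v) = κ(v) + Σ_v κ(v₍₁₎)·b·T(v₍₂₎). For v = a·l·b everything vanishes, and for v = a·l·a the
right-hand side is (χ(al) + Σ η(…)·b·ω(…))·(a-b) = ω(al)·(a-b), by the key identity once more. -/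

section Conv

variable (F F' G G' : Word → ZAB)

@[simp] lemma conv_nil : conv F G [] = 0 := by simp [conv]

lemma conv_cons (x : Bool) (u : Word) :
    conv F G (x :: u) = F [] * genB * G u + conv (fun t => F (x :: t)) G u := by
  rw [conv, conv, List.length_cons, Finset.sum_range_succ', add_comm]
  simp

lemma conv_concat (l : Word) (x : Bool) :
    conv F G (l ++ [x]) = conv F (fun u => G (u ++ [x])) l + F l * genB * G [] := by
  rw [conv, conv, List.length_append, List.length_singleton, Finset.sum_range_succ]
  congr 1
  · refine Finset.sum_congr rfl fun i hi => ?_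
    have hi : i < l.length := Finset.mem_range.mp hi
    rw [List.take_append_of_le_length hi.le, List.drop_append_of_le_length hi]
  · simp

lemma conv_mul_left (m : ZAB) (v : Word) : conv (fun t => m * F t) G v = m * conv F G v := by
  simp only [conv, Finset.mul_sum, mul_assoc]

lemma conv_mul_right (m : ZAB) (v : Word) : conv F (fun t => G t * m) v = conv F G v * m := by
  simp only [conv, Finset.sum_mul, mul_assoc]

lemma conv_smul_left (n : ℤ) (v : Word) : conv (n • F) G v = n • conv F G v := by
  simp only [conv, Finset.smul_sum, Pi.smul_apply, smul_mul_assoc]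

lemma conv_smul_right (n : ℤ) (v : Word) : conv F (n • G) v = n • conv F G v := by
  simp only [conv, Finset.smul_sum, Pi.smul_apply, mul_smul_comm]

@[simp] lemma conv_zero_left (v : Word) : conv (fun _ => 0) G v = 0 := by
  simp [conv]

@[simp] lemma conv_zero_right (v : Word) : conv F (fun _ => 0) v = 0 := by
  simp [conv]

lemma sum_conv_right {ι : Type*} (s : Finset ι) (G : ι → Word → ZAB) (v : Word) :
    ∑ j ∈ s, conv F (G j) v = conv F (fun u => ∑ j ∈ s, G j u) v := by
  simp only [conv, Finset.mul_sum]
  exact Finset.sum_comm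

lemma conv_congr_right (v : Word) (h : ∀ u : Word, u.length < v.length → G u = G' u) :
    conv F G v = conv F G' v :=
  Finset.sum_congr rfl fun i hi => by
    rw [h _ (by simp only [List.length_drop]; have := Finset.mem_range.mp hi; omega)]

lemma conv_cons_congr_left (x : Bool) (u : Word) (h₀ : F [] = F' [])
    (h : ∀ t, F (x :: t) = F' (x :: t)) : conv F G (x :: u) = conv F' G (x :: u) := by
  simp only [conv_cons, h₀, h]

end Conv

lemma isChain_ge_false_cons_iff (t : Word) :
    List.IsChain (· ≥ ·) (false :: t) ↔ ∀ x ∈ t, x = false := by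
  rw [List.isChain_iff_pairwise, List.pairwise_cons]
  refine ⟨fun h x hx => le_bot_iff.mp (h.1 x hx), fun h => ⟨fun x hx => (h x hx).le, ?_⟩⟩
  exact List.pairwise_of_forall_mem_list fun x hx y hy => by simp [h x hx, h y hy]

lemma isChain_ge_concat_true_iff (t : Word) :
    List.IsChain (· ≥ ·) (t ++ [true]) ↔ ∀ x ∈ t, x = true := by
  rw [List.isChain_iff_pairwise, List.pairwise_append]
  refine ⟨fun h x hx => top_le_iff.mp (h.2.2 x hx true (by simp)),
    fun h => ⟨?_, by simp, fun x hx _ _ => by simp [h x hx]⟩⟩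
  exact List.pairwise_of_forall_mem_list fun x hx y hy => by simp [h x hx, h y hy]

def chiW (w : Word) : ZAB := if List.IsChain (· ≥ ·) w then amb ^ w.length else 0

lemma etaW_eq_two_smul_chiW : etaW = (2 : ℤ) • chiW := by
  ext1 w
  simp only [etaW, chiW, Pi.smul_apply]
  split_ifs <;> simp

lemma conv_etaW (G : Word → ZAB) (v : Word) : conv etaW G v = (2 : ℤ) • conv chiW G v := by
  rw [etaW_eq_two_smul_chiW, conv_smul_left]

@[simp] lemma chiW_nil : chiW [] = 1 := by simp [chiW]

lemma chiW_singleton_false : chiW [false] = amb := by simp [chiW]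

lemma chiW_true_cons (t : Word) : chiW (true :: t) = amb * chiW t := by
  simp only [chiW, List.isChain_cons, List.length_cons, pow_succ']
  split_ifs <;> simp_all

lemma chiW_false_false_cons (t : Word) : chiW (false :: false :: t) = amb * chiW (false :: t) := by
  simp only [chiW, List.isChain_cons_cons, List.length_cons, pow_succ']
  split_ifs <;> simp_all

lemma chiW_false_true_cons (t : Word) : chiW (false :: true :: t) = 0 := by
  simp [chiW, List.isChain_cons_cons]

lemma chiW_concat_false (l : Word) : chiW (l ++ [false]) = chiW l * amb := by
  simp only [chiW, List.isChain_append, List.length_append, List.length_singleton, pow_succ]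
  split_ifs <;> simp_all

lemma kappaW_false_cons (t : Word) : kappaW (false :: t) = chiW (false :: t) := by
  simp only [kappaW, chiW, isChain_ge_false_cons_iff, List.forall_mem_cons, true_and]

lemma conv_kappaW_false_cons (G : Word → ZAB) (u : Word) :
    conv kappaW G (false :: u) = conv chiW G (false :: u) :=
  conv_cons_congr_left _ _ _ _ _ (by simp [kappaW]) kappaW_false_cons

lemma lamUbW_nil : lamUbW [] = 0 := by
  simp [lamUbW, etaW, betaW, two_smul]

lemma lamUbW_concat_true (l : Word) : lamUbW (l ++ [true]) = 0 := by
  simp only [lamUbW, etaW, betaW, isChain_ge_concat_true_iff, List.mem_append,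
    List.mem_singleton]
  split_ifs <;> simp_all

lemma lamUbW_concat_false (l : Word) : lamUbW (l ++ [false]) = (2 : ℤ) • (chiW l * amb) := by
  rw [lamUbW, etaW_eq_two_smul_chiW, Pi.smul_apply, chiW_concat_false]
  simp [betaW]

lemma omegaW_true_cons (u : Word) : omegaW (true :: u) = genC * omegaW u := rfl

lemma omegaW_false_false_cons (u : Word) :
    omegaW (false :: false :: u) = genC * omegaW (false :: u) := rfl

lemma omegaW_false_true_cons (u : Word) :
    omegaW (false :: true :: u) = ((2 : ℤ) • genD) * omegaW u := rfl

lemma genC_eq_amb_add : genC = amb + (2 : ℤ) • genB := by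
  simp only [genC, amb, two_smul]; abel

lemma genC_mul_of_eq {ω₀ χ₀ X : ZAB} (h : ω₀ = χ₀ + (2 : ℤ) • X) :
    genC * ω₀ = amb * χ₀ + (2 : ℤ) • (genB * ω₀ + amb * X) := by
  subst h
  rw [genC_eq_amb_add]
  noncomm_ring

lemma omegaW_eq_chiW_add_two_smul_conv :
    ∀ v : Word, omegaW v = chiW v + (2 : ℤ) • conv chiW omegaW v
  | [] => by simp [omegaW]
  | [false] => by simp [omegaW, conv_cons, chiW_singleton_false, genC_eq_amb_add]
  | true :: u => by
    simp only [conv_cons, chiW_true_cons, conv_mul_left, omegaW_true_cons, chiW_nil, one_mul]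
    exact genC_mul_of_eq (omegaW_eq_chiW_add_two_smul_conv u)
  | false :: false :: u => by
    have hχ : chiW [false] = amb * chiW [] := by simp [chiW_singleton_false]
    rw [conv_cons, conv_cons_congr_left _ (fun t => amb * chiW t) _ _ _ hχ chiW_false_false_cons,
      conv_mul_left, chiW_false_false_cons, omegaW_false_false_cons, chiW_nil, one_mul]
    exact genC_mul_of_eq (omegaW_eq_chiW_add_two_smul_conv (false :: u))
  | false :: true :: u => by
    simp only [conv_cons, chiW_false_true_cons, conv_zero_left, chiW_nil, chiW_singleton_false,
      omegaW_false_true_cons, omegaW_true_cons, genD, genC, amb]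
    noncomm_ring

lemma omegaW_eq_chiW_add_conv (v : Word) : omegaW v = chiW v + conv etaW omegaW v := by
  rw [conv_etaW]
  exact omegaW_eq_chiW_add_two_smul_conv v

def tailW (w : Word) : ZAB :=
  if w.getLast? = some false then (2 : ℤ) • (omegaW w.dropLast * amb) else 0

@[simp] lemma tailW_nil : tailW [] = 0 := by simp [tailW]

@[simp] lemma tailW_concat_true (l : Word) : tailW (l ++ [true]) = 0 := by simp [tailW]

lemma tailW_concat_false (l : Word) : tailW (l ++ [false]) = (2 : ℤ) • (omegaW l * amb) := by
  simp [tailW]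

lemma conv_tailW_concat_true (F : Word → ZAB) (l : Word) : conv F tailW (l ++ [true]) = 0 := by
  simp [conv_concat]

lemma conv_tailW_concat_false (F : Word → ZAB) (l : Word) :
    conv F tailW (l ++ [false]) = (2 : ℤ) • (conv F omegaW l * amb) := by
  simp only [conv_concat, tailW_concat_false, tailW_nil, mul_zero, add_zero]
  rw [← conv_mul_right, ← conv_smul_right]
  rfl

lemma lamUbW_add_conv_etaW_tailW (v : Word) : lamUbW v + conv etaW tailW v = tailW v := by
  induction v using List.reverseRecOn with
  | nil => simp [lamUbW_nil]
  | append_singleton l x _ =>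
    cases x with
    | true => simp [lamUbW_concat_true, conv_tailW_concat_true]
    | false =>
      rw [lamUbW_concat_false, conv_tailW_concat_false, tailW_concat_false,
        omegaW_eq_chiW_add_conv l, add_mul, smul_add]

lemma sum_tailChain_lamUbW (n : ℕ) (v : Word) (hv : v.length ≤ n) :
    ∑ j ∈ Finset.range (n + 1), tailChain lamUbW j v = tailW v := by
  induction n generalizing v with
  | zero => simp [List.length_eq_zero_iff.mp (Nat.le_zero.mp hv), tailChain, lamUbW_nil]
  | succ n ih =>
    rw [Finset.sum_range_succ']
    simp only [tailChain]
    rw [sum_conv_right, conv_congr_right _ _ tailW v fun u hu => ih u (by omega),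
      add_comm, lamUbW_add_conv_etaW_tailW]

lemma phiUbW_eq_kappaW_add_conv (v : Word) : phiUbW v = kappaW v + conv kappaW tailW v := by
  cases v with
  | nil => simp [phiUbW, phiUbK, Finset.sum_range_succ]
  | cons x u =>
    rw [phiUbW, List.length_cons, Finset.sum_range_succ', Finset.sum_range_succ']
    simp only [phiUbK, add_zero]
    rw [sum_conv_right, conv_congr_right _ _ tailW _ fun w hw => sum_tailChain_lamUbW _ w
      (by simp at hw; omega), add_comm]

lemma mon_mul_mon (u v : Word) : mon u * mon v = mon (u ++ v) := by
  rw [mon, mon, mon, MonoidAlgebra.single_mul_single, one_mul, ← FreeMonoid.ofList_append]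

lemma lin_mon (f : Word → ZAB) (u : Word) : lin f (mon u) = f u := by
  simp [lin, mon]

lemma lin_omegaW_genA_mul_rW_concat_false (l : Word) :
    lin omegaW (genA * rW (l ++ [false])) = omegaW (false :: l) := by
  simp [rW, genA, mon_mul_mon, lin_mon]

/-- for every ab-monomial `w` of length at least 1,
`φ_ub(a·w) = ω(a·r(w))·(a-b)`. -/
theorem phiUb_aw (w : Word) (hw : w ≠ []) :
    phiUbW (false :: w) = lin omegaW (genA * rW w) * amb := by
  obtain ⟨l, x, rfl⟩ := (List.eq_nil_or_concat' w).resolve_left hw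
  rw [phiUbW_eq_kappaW_add_conv, ← List.cons_append]
  cases x with
  | true =>
    rw [conv_tailW_concat_true]
    simp [kappaW, rW]
  | false =>
    rw [lin_omegaW_genA_mul_rW_concat_false, conv_tailW_concat_false, conv_kappaW_false_cons,
      List.cons_append, kappaW_false_cons, ← List.cons_append, chiW_concat_false,
      ← smul_mul_assoc, ← add_mul, ← omegaW_eq_chiW_add_two_smul_conv]

end CD

end
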